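/- arXiv:2012.00379 — 4 statements merged into one kernel-verified Lean document; each statement's English description precedes it below -/
import Mathlib

section
/- For every real number α and every integer i with 0 ≤ i ≤ 5, one has α·x^i ∈ ℤ[x] if and only if α ∈ G. -/
/-- `x = exp(πi/6)`, a primitive 12th root of unity. -/
noncomputable def x : ℂ := Complex.exp (Real.pi * Complex.I / 6)

/-- `G = ℤ[√3]` as a subset of `ℝ`. -/
def G : Set ℝ := {r | ∃ a b : ℤ, r = a + b * Real.sqrt 3}

/-- `ℤ[x]`: the additive subgroup of `ℂ` generated by `x^k`, `0 ≤ k ≤ 5`. -/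
def Zx : Set ℂ := {z | ∃ n : Fin 6 → ℤ, z = ∑ k : Fin 6, (n k : ℂ) * x ^ (k : ℕ)}

lemma hs3 : ((Real.sqrt 3 : ℝ) : ℂ)^2 = 3 := by
  norm_cast
  rw [Real.sq_sqrt]; norm_num

lemma hx1 : x = ((Real.sqrt 3 / 2 : ℝ) : ℂ) + ((1/2 : ℝ) : ℂ) * Complex.I := by
  have h : (Real.pi : ℂ) * Complex.I / 6 = ((Real.pi/6 : ℝ) : ℂ) * Complex.I := by
    push_cast; ring
  rw [x, h, Complex.exp_mul_I, ← Complex.ofReal_cos, ← Complex.ofReal_sin,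
    Real.cos_pi_div_six, Real.sin_pi_div_six]

lemma hx2 : x^2 = ((1/2 : ℝ) : ℂ) + ((Real.sqrt 3 / 2 : ℝ) : ℂ) * Complex.I := by
  rw [sq, hx1]; push_cast
  linear_combination (hs3 + Complex.I_sq)/4

lemma hx3 : x^3 = ((0 : ℝ) : ℂ) + ((1 : ℝ) : ℂ) * Complex.I := by
  rw [pow_succ, hx2, hx1]; push_cast
  linear_combination (Complex.I/4)*hs3 + (((Real.sqrt 3:ℝ):ℂ)/4)*Complex.I_sq

lemma hx4 : x^4 = ((-(1/2) : ℝ) : ℂ) + ((Real.sqrt 3 / 2 : ℝ) : ℂ) * Complex.I := by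
  rw [pow_succ, hx3, hx1]; push_cast
  linear_combination Complex.I_sq/2

lemma hx5 : x^5 = ((-(Real.sqrt 3 / 2) : ℝ) : ℂ) + ((1/2 : ℝ) : ℂ) * Complex.I := by
  rw [pow_succ, hx4, hx1]; push_cast
  linear_combination (Complex.I/4)*hs3 + (((Real.sqrt 3:ℝ):ℂ)/4)*Complex.I_sq

lemma hx6 : x^6 = -1 := by
  rw [pow_succ, hx5, hx1]; push_cast
  linear_combination (-1/4 : ℂ)*hs3 + (1/4 : ℂ)*Complex.I_sq

lemma Zx_mul_x {z : ℂ} (h : z ∈ Zx) : z * x ∈ Zx := by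
  obtain ⟨n, rfl⟩ := h
  refine ⟨![-n 5, n 0, n 1, n 2, n 3, n 4], ?_⟩
  simp [Fin.sum_univ_six, show ((3:Fin 6):ℕ)=3 from rfl, show ((4:Fin 6):ℕ)=4 from rfl,
    show ((5:Fin 6):ℕ)=5 from rfl,
    show (![-n 5, n 0, n 1, n 2, n 3, n 4] : Fin 6 → ℤ) 5 = n 4 from rfl]
  linear_combination (n 5 : ℂ) * hx6

lemma Zx_mul_x_pow {z : ℂ} (h : z ∈ Zx) (m : ℕ) : z * x ^ m ∈ Zx := by
  induction m with
  | zero => simpa using h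
  | succ k ih => rw [pow_succ, ← mul_assoc]; exact Zx_mul_x ih

lemma int_sqrt3 {a b : ℤ} (h : (a:ℝ) + b * Real.sqrt 3 = 0) : (a:ℝ) = 0 ∧ (b:ℝ) = 0 := by
  have irr : Irrational (Real.sqrt 3) := by
    simpa using Nat.prime_three.irrational_sqrt
  have hb : (b:ℝ) = 0 := by
    by_contra hb
    apply irr
    refine ⟨(-a)/b, ?_⟩
    push_cast
    field_simp
    linear_combination -h
  refine ⟨?_, hb⟩
  rw [hb] at h; simpa using h

theorem stmt1 (α : ℝ) (i : ℕ) (hi : i ≤ 5) :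
    (α : ℂ) * x ^ i ∈ Zx ↔ α ∈ G := by
  constructor
  · intro h
    have h12 : (α:ℂ) = ((α:ℂ) * x^i) * x^(12-i) := by
      rw [mul_assoc, ← pow_add]
      have e : i + (12 - i) = 12 := by omega
      rw [e, show (12:ℕ) = 6*2 from rfl, pow_mul, hx6]
      norm_num
    have hmem : (α:ℂ) ∈ Zx := by
      rw [h12]; exact Zx_mul_x_pow h _
    obtain ⟨n, hn⟩ := hmem
    simp only [Fin.sum_univ_six, Fin.isValue, show ((0:Fin 6):ℕ)=0 from rfl,
      show ((1:Fin 6):ℕ)=1 from rfl, show ((2:Fin 6):ℕ)=2 from rfl,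
      show ((3:Fin 6):ℕ)=3 from rfl, show ((4:Fin 6):ℕ)=4 from rfl,
      show ((5:Fin 6):ℕ)=5 from rfl] at hn
    rw [pow_zero, pow_one, hx2, hx3, hx4, hx5, hx1] at hn
    rw [Complex.ext_iff] at hn
    obtain ⟨hre, him⟩ := hn
    simp only [Complex.add_re, Complex.add_im, Complex.mul_re, Complex.mul_im,
      Complex.ofReal_re, Complex.ofReal_im, Complex.I_re, Complex.I_im,
      Complex.intCast_re, Complex.intCast_im, Complex.one_re, Complex.one_im,
      mul_zero, mul_one, zero_mul, sub_zero, add_zero, zero_add, zero_sub] at hre him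
    have key := int_sqrt3 (a := n 1 + n 5 + 2 * n 3) (b := n 2 + n 4)
      (by push_cast; linarith)
    obtain ⟨k1, k2⟩ := key
    refine ⟨n 0 + n 2, -(n 3 + n 5), ?_⟩
    push_cast
    push_cast at k1 k2
    linear_combination hre + (Real.sqrt 3/2)*k1 - (1/2)*k2
  · rintro ⟨a, b, rfl⟩
    have hmem : ((a + b*Real.sqrt 3 : ℝ) : ℂ) ∈ Zx := by
      refine ⟨![a, b, 0, 0, 0, -b], ?_⟩
      simp [Fin.sum_univ_six, show ((3:Fin 6):ℕ)=3 from rfl, show ((4:Fin 6):ℕ)=4 from rfl,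
        show ((5:Fin 6):ℕ)=5 from rfl,
        show (![a, b, 0, 0, 0, -b] : Fin 6 → ℤ) 5 = -b from rfl]
      rw [hx5, hx1]
      push_cast
      ring
    exact Zx_mul_x_pow hmem i
end

section
/- Let α, β be real numbers and let i < j be integers in [0,5] with j − i = 1 or j − i = 5. Then α·x^i + β·x^j ∈ ℤ[x] if and only if α ∈ G and β ∈ G. -/
lemma hx : x = ((Real.sqrt 3 : ℂ) + Complex.I) / 2 := by
  have : (Real.pi : ℂ) * Complex.I / 6 = ((Real.pi / 6 : ℝ) : ℂ) * Complex.I := by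
    push_cast; ring
  rw [x, this, Complex.exp_mul_I, ← Complex.ofReal_cos, ← Complex.ofReal_sin,
    Real.cos_pi_div_six, Real.sin_pi_div_six]
  push_cast
  ring

lemma hs2 : ((Real.sqrt 3 : ℝ) : ℂ) ^ 2 = 3 := by
  rw [← Complex.ofReal_pow, Real.sq_sqrt (by norm_num : (3:ℝ) ≥ 0)]
  norm_num

lemma x2 : x ^ 2 = ((Real.sqrt 3 : ℝ) : ℂ) * x - 1 := by
  rw [hx]
  linear_combination (-(1:ℂ)/4) * hs2 + (1/4) * Complex.I_sq

lemma x6 : x ^ 6 = -1 := by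
  have h : x ^ 6 = Complex.exp ((6:ℕ) * (Real.pi * Complex.I / 6)) := by
    rw [Complex.exp_nat_mul]; rfl
  rw [h, show ((6:ℕ):ℂ) * (Real.pi * Complex.I / 6) = Real.pi * Complex.I by push_cast; ring,
    Complex.exp_pi_mul_I]

lemma imx : x.im = 1/2 := by
  rw [hx]; simp

lemma indep (a b c d : ℝ) (h : (a:ℂ) + b * x = c + d * x) : a = c ∧ b = d := by
  have him := congrArg Complex.im h
  simp [imx] at him
  have hb : b = d := by linarith
  subst hb
  have : (a:ℂ) = c := by linear_combination h
  exact ⟨by exact_mod_cast this, rfl⟩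

lemma mulx (z : ℂ) (h : z ∈ Zx) : x * z ∈ Zx := by
  obtain ⟨n, hz⟩ := h
  refine ⟨![-n 5, n 0, n 1, n 2, n 3, n 4], ?_⟩
  simp only [Fin.sum_univ_six, hz, show ((3:Fin 6):ℕ) = 3 from rfl,
    show ((4:Fin 6):ℕ) = 4 from rfl, show ((5:Fin 6):ℕ) = 5 from rfl,
    show ((2:Fin 6):ℕ) = 2 from rfl, show ((1:Fin 6):ℕ) = 1 from rfl,
    show ((0:Fin 6):ℕ) = 0 from rfl,
    show (![-n 5, n 0, n 1, n 2, n 3, n 4] : Fin 6 → ℤ) 0 = -n 5 from rfl,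
    show (![-n 5, n 0, n 1, n 2, n 3, n 4] : Fin 6 → ℤ) 1 = n 0 from rfl,
    show (![-n 5, n 0, n 1, n 2, n 3, n 4] : Fin 6 → ℤ) 2 = n 1 from rfl,
    show (![-n 5, n 0, n 1, n 2, n 3, n 4] : Fin 6 → ℤ) 3 = n 2 from rfl,
    show (![-n 5, n 0, n 1, n 2, n 3, n 4] : Fin 6 → ℤ) 4 = n 3 from rfl,
    show (![-n 5, n 0, n 1, n 2, n 3, n 4] : Fin 6 → ℤ) 5 = n 4 from rfl]
  push_cast
  linear_combination ((n 5 : ℂ)) * x6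

lemma mulxpow (k : ℕ) (z : ℂ) (h : z ∈ Zx) : x ^ k * z ∈ Zx := by
  induction k with
  | zero => simpa using h
  | succ m ih =>
    have := mulx _ ih
    rwa [show x * (x ^ m * z) = x ^ (m+1) * z by ring] at this

lemma iffmul (z : ℂ) : x * z ∈ Zx ↔ z ∈ Zx := by
  constructor
  · intro h
    have h2 := mulxpow 11 _ h
    rwa [show x ^ 11 * (x * z) = z by linear_combination (z * (x^6 - 1)) * x6] at h2
  · exact mulx z

lemma iffpow (k : ℕ) (z : ℂ) : x ^ k * z ∈ Zx ↔ z ∈ Zx := by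
  induction k with
  | zero => simp
  | succ m ih =>
    rw [show x ^ (m+1) * z = x * (x ^ m * z) by ring, iffmul, ih]

lemma negG {a : ℝ} : -a ∈ G ↔ a ∈ G := by
  constructor
  · rintro ⟨p, q, h⟩
    exact ⟨-p, -q, by push_cast; linarith⟩
  · rintro ⟨p, q, h⟩
    exact ⟨-p, -q, by push_cast; linarith⟩

lemma L01 (α β : ℝ) : (α : ℂ) + (β : ℂ) * x ∈ Zx ↔ α ∈ G ∧ β ∈ G := by
  constructor
  · rintro ⟨n, hz⟩
    have e : (∑ k : Fin 6, (n k : ℂ) * x ^ (k:ℕ)) =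
        (((n 0 : ℝ) - n 2 - 2 * n 4 + (-(n 3 : ℝ) - n 5) * Real.sqrt 3 : ℝ) : ℂ) +
        (((n 1 : ℝ) + 2 * n 3 + n 5 + ((n 2 : ℝ) + n 4) * Real.sqrt 3 : ℝ) : ℂ) * x := by
      simp only [Fin.sum_univ_six, show ((3:Fin 6):ℕ) = 3 from rfl,
        show ((4:Fin 6):ℕ) = 4 from rfl, show ((5:Fin 6):ℕ) = 5 from rfl,
        show ((2:Fin 6):ℕ) = 2 from rfl, show ((1:Fin 6):ℕ) = 1 from rfl,
        show ((0:Fin 6):ℕ) = 0 from rfl]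
      push_cast
      linear_combination ((n 2 : ℂ) + (n 3 : ℂ) * (x + ((Real.sqrt 3 : ℝ) : ℂ))
          + (n 4 : ℂ) * (x^2 + ((Real.sqrt 3 : ℝ) : ℂ)*x + 2)
          + (n 5 : ℂ) * (x^3 + ((Real.sqrt 3 : ℝ) : ℂ)*x^2 + 2*x + ((Real.sqrt 3 : ℝ) : ℂ))) * x2
        + ((n 3 : ℂ) * x + (n 4 : ℂ) * x^2 + (n 5 : ℂ) * (x^3 + x)) * hs2
    rw [e] at hz
    obtain ⟨hα, hβ⟩ := indep _ _ _ _ hz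
    exact ⟨⟨n 0 - n 2 - 2 * n 4, -n 3 - n 5, by rw [hα]; push_cast; ring⟩,
           ⟨n 1 + 2 * n 3 + n 5, n 2 + n 4, by rw [hβ]; push_cast; ring⟩⟩
  · rintro ⟨⟨a, b, ha⟩, ⟨c, d, hb⟩⟩
    refine ⟨![a + d, 2*b + c, d, -b, 0, 0], ?_⟩
    simp only [Fin.sum_univ_six, show ((3:Fin 6):ℕ) = 3 from rfl,
      show ((4:Fin 6):ℕ) = 4 from rfl, show ((5:Fin 6):ℕ) = 5 from rfl,
      show ((2:Fin 6):ℕ) = 2 from rfl, show ((1:Fin 6):ℕ) = 1 from rfl,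
      show ((0:Fin 6):ℕ) = 0 from rfl,
      show (![a + d, 2*b + c, d, -b, 0, 0] : Fin 6 → ℤ) 0 = a + d from rfl,
      show (![a + d, 2*b + c, d, -b, 0, 0] : Fin 6 → ℤ) 1 = 2*b + c from rfl,
      show (![a + d, 2*b + c, d, -b, 0, 0] : Fin 6 → ℤ) 2 = d from rfl,
      show (![a + d, 2*b + c, d, -b, 0, 0] : Fin 6 → ℤ) 3 = -b from rfl,
      show (![a + d, 2*b + c, d, -b, 0, 0] : Fin 6 → ℤ) 4 = 0 from rfl,
      show (![a + d, 2*b + c, d, -b, 0, 0] : Fin 6 → ℤ) 5 = 0 from rfl]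
    rw [ha, hb]
    push_cast
    linear_combination (-(d:ℂ) + (b:ℂ) * (x + ((Real.sqrt 3 : ℝ) : ℂ))) * x2
      + ((b:ℂ) * x) * hs2

theorem stmt2 (α β : ℝ) (i j : ℕ) (hj : j ≤ 5) (hij : i < j)
    (hd : j - i = 1 ∨ j - i = 5) :
    (α : ℂ) * x ^ i + (β : ℂ) * x ^ j ∈ Zx ↔ α ∈ G ∧ β ∈ G := by
  have hi : i ≤ 5 := by omega
  interval_cases j <;> interval_cases i <;> first
  | (exfalso; omega)
  | · -- case (0,5)
      rw [show (α : ℂ) * x ^ 0 + (β : ℂ) * x ^ 5 = x ^ 5 * (((β:ℝ):ℂ) + ((-α : ℝ) : ℂ) * x) from by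
        push_cast; linear_combination (α : ℂ) * x6, iffpow, L01]
      rw [negG]
      tauto
  | · first
      | rw [show (α : ℂ) * x ^ 0 + (β : ℂ) * x ^ 1 = x ^ 6 * (((-α : ℝ) : ℂ) + ((-β : ℝ) : ℂ) * x) from by
            push_cast; linear_combination ((α:ℂ) * x ^ 0 + (β:ℂ) * x ^ 1) * x6, iffpow, L01]
      | rw [show (α : ℂ) * x ^ 1 + (β : ℂ) * x ^ 2 = x ^ 7 * (((-α : ℝ) : ℂ) + ((-β : ℝ) : ℂ) * x) from by
            push_cast; linear_combination ((α:ℂ) * x ^ 1 + (β:ℂ) * x ^ 2) * x6, iffpow, L01]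
      | rw [show (α : ℂ) * x ^ 2 + (β : ℂ) * x ^ 3 = x ^ 8 * (((-α : ℝ) : ℂ) + ((-β : ℝ) : ℂ) * x) from by
            push_cast; linear_combination ((α:ℂ) * x ^ 2 + (β:ℂ) * x ^ 3) * x6, iffpow, L01]
      | rw [show (α : ℂ) * x ^ 3 + (β : ℂ) * x ^ 4 = x ^ 9 * (((-α : ℝ) : ℂ) + ((-β : ℝ) : ℂ) * x) from by
            push_cast; linear_combination ((α:ℂ) * x ^ 3 + (β:ℂ) * x ^ 4) * x6, iffpow, L01]
      | rw [show (α : ℂ) * x ^ 4 + (β : ℂ) * x ^ 5 = x ^ 10 * (((-α : ℝ) : ℂ) + ((-β : ℝ) : ℂ) * x) from by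
            push_cast; linear_combination ((α:ℂ) * x ^ 4 + (β:ℂ) * x ^ 5) * x6, iffpow, L01]
      rw [negG, negG]
end

section
/- Let α, β be real numbers and let i < j be integers in [0,5] with j − i = 4. Then α·x^i + β·x^j ∈ ℤ[x] if and only if there exist integers α₁, α₂, β₁, β₂ such that α = (α₁ + α₂√3)/√3, β = (β₁ + β₂√3)/√3, and α₁ − 2β₁ is divisible by 3. -/
/-!
Since `x + x⁻¹ = √3`, `x` is a root of `X² - √3 X + 1`, so `ℤ[x] = ℤ[√3] + ℤ[√3] x`, and this
decomposition is unique over `ℝ` because `x` is not real. Multiplication by the unit `x ^ i`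
preserves `ℤ[x]`, and `x⁴ = √3 x - 2`, so `α x^i + β x^(i+4) ∈ ℤ[x]` iff `α - 2β` and `β√3` lie
in `ℤ[√3]`. Writing `α√3 = α₁ + α₂√3` and `β√3 = β₁ + β₂√3`, the first condition says that
`(α₁ - 2β₁) + (α₂ - 2β₂)√3 ∈ √3 ℤ[√3] = 3ℤ + ℤ√3`, i.e. `3 ∣ α₁ - 2β₁`.
-/

open Complex

def Zsqrt3 : Set ℝ := {r | ∃ a b : ℤ, r = a + b * √3}

lemma x_eq : x = (√3 + I) / 2 := by
  rw [x, show (Real.pi * I / 6 : ℂ) = ((Real.pi / 6 : ℝ) : ℂ) * I by push_cast; ring,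
    exp_mul_I, ← ofReal_cos, ← ofReal_sin, Real.cos_pi_div_six, Real.sin_pi_div_six]
  push_cast
  ring

lemma x_im : x.im = 1 / 2 := by simp [x_eq]

lemma sqrt_three_sq : (√3 : ℂ) ^ 2 = 3 := by
  rw [← ofReal_pow, Real.sq_sqrt (by norm_num)]; norm_num

lemma x_sq : x ^ 2 = √3 * x - 1 := by
  rw [x_eq]; linear_combination (-1/4 : ℂ) * sqrt_three_sq + (1/4 : ℂ) * I_sq

lemma x_pow_three : x ^ 3 = 2 * x - √3 := by
  linear_combination (x + √3) * x_sq + x * sqrt_three_sq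

lemma x_pow_four : x ^ 4 = √3 * x - 2 := by
  linear_combination x * x_pow_three + 2 * x_sq

lemma x_pow_five : x ^ 5 = x - √3 := by
  linear_combination x * x_pow_four + √3 * x_sq + x * sqrt_three_sq

lemma x_pow_twelve : x ^ 12 = 1 := by
  rw [x, ← exp_nat_mul,
    show ((12 : ℕ) : ℂ) * (Real.pi * I / 6) = 2 * Real.pi * I by push_cast; ring, exp_two_pi_mul_I]

lemma mem_Zx_iff {z : ℂ} : z ∈ Zx ↔ ∃ u ∈ Zsqrt3, ∃ v ∈ Zsqrt3, z = u + v * x := by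
  constructor
  · rintro ⟨n, rfl⟩
    refine ⟨_, ⟨n 0 - n 2 - 2 * n 4, -n 3 - n 5, rfl⟩,
      _, ⟨n 1 + 2 * n 3 + n 5, n 2 + n 4, rfl⟩, ?_⟩
    simp only [Fin.sum_univ_six, Fin.val_zero, Fin.val_one, Fin.val_two, pow_zero, pow_one]
    rw [show ((3 : Fin 6) : ℕ) = 3 from rfl, show ((4 : Fin 6) : ℕ) = 4 from rfl,
      show ((5 : Fin 6) : ℕ) = 5 from rfl, x_sq, x_pow_three, x_pow_four, x_pow_five]
    push_cast
    ring
  · rintro ⟨_, ⟨a, b, rfl⟩, _, ⟨c, d, rfl⟩, rfl⟩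
    refine ⟨![a + d, 2 * b + c, d, -b, 0, 0], ?_⟩
    simp [Fin.sum_univ_six]
    linear_combination b * x_pow_three - d * x_sq

lemma mul_x_mem_Zx {z : ℂ} (hz : z ∈ Zx) : z * x ∈ Zx := by
  obtain ⟨_, ⟨a, b, rfl⟩, _, ⟨c, d, rfl⟩, rfl⟩ := mem_Zx_iff.mp hz
  refine mem_Zx_iff.mpr ⟨_, ⟨-c, -d, rfl⟩, _, ⟨a + 3 * d, b + c, rfl⟩, ?_⟩
  push_cast
  linear_combination (c + d * √3 : ℂ) * x_sq + d * x * sqrt_three_sq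

lemma mul_x_pow_mem_Zx_iff {z : ℂ} (n : ℕ) : z * x ^ n ∈ Zx ↔ z ∈ Zx := by
  have mul_pow_mem : ∀ {w : ℂ} (m : ℕ), w ∈ Zx → w * x ^ m ∈ Zx := by
    intro w m hw
    induction m with
    | zero => simpa using hw
    | succ m ih => simpa only [pow_succ, ← mul_assoc] using mul_x_mem_Zx ih
  refine ⟨fun h => ?_, mul_pow_mem n⟩
  have hunit : x ^ n * x ^ (11 * n) = 1 := by
    rw [← pow_add, show n + 11 * n = 12 * n by ring, pow_mul, x_pow_twelve, one_pow]
  simpa only [mul_assoc, hunit, mul_one] using mul_pow_mem (11 * n) h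

lemma ofReal_add_mul_x_inj {u v u' v' : ℝ} :
    (u : ℂ) + v * x = u' + v' * x ↔ u = u' ∧ v = v' := by
  refine ⟨fun h => ?_, fun ⟨hu, hv⟩ => hu ▸ hv ▸ rfl⟩
  have hv : v = v' := by simpa [x_im] using congrArg im h
  subst hv
  exact ⟨by simpa using h, rfl⟩

lemma ofReal_add_mul_x_mem_Zx_iff (u v : ℝ) : (u : ℂ) + v * x ∈ Zx ↔ u ∈ Zsqrt3 ∧ v ∈ Zsqrt3 := by
  rw [mem_Zx_iff]
  constructor
  · rintro ⟨u', hu', v', hv', h⟩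
    obtain ⟨rfl, rfl⟩ := ofReal_add_mul_x_inj.mp h
    exact ⟨hu', hv'⟩
  · exact fun ⟨hu, hv⟩ => ⟨u, hu, v, hv, rfl⟩

lemma sub_two_mul_mem_and_mul_sqrt_three_mem_iff (α β : ℝ) :
    α - 2 * β ∈ Zsqrt3 ∧ β * √3 ∈ Zsqrt3 ↔
      ∃ α₁ α₂ β₁ β₂ : ℤ, α = (α₁ + α₂ * √3) / √3 ∧ β = (β₁ + β₂ * √3) / √3 ∧ 3 ∣ α₁ - 2 * β₁ := by
  have hs : √3 * √3 = 3 := Real.mul_self_sqrt (by norm_num)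
  have hs0 : √3 ≠ 0 := by positivity
  constructor
  · rintro ⟨⟨m, n, hmn⟩, ⟨p, q, hpq⟩⟩
    refine ⟨3 * n + 2 * p, m + 2 * q, p, q, ?_, (eq_div_iff hs0).mpr hpq, ⟨n, by ring⟩⟩
    rw [eq_div_iff hs0]
    push_cast
    linear_combination √3 * hmn + 2 * hpq + n * hs
  · rintro ⟨α₁, α₂, β₁, β₂, rfl, rfl, k, hk⟩
    have hk' : (α₁ : ℝ) - 2 * β₁ = 3 * k := by exact_mod_cast hk
    refine ⟨⟨α₂ - 2 * β₂, k, ?_⟩, ⟨β₁, β₂, by field_simp⟩⟩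
    field_simp
    push_cast
    linear_combination hk' - k * hs

theorem stmt5_general (α β : ℝ) (i j : ℕ) (hd : j - i = 4) :
    (α : ℂ) * x ^ i + (β : ℂ) * x ^ j ∈ Zx ↔
      ∃ α₁ α₂ β₁ β₂ : ℤ,
        α = (α₁ + α₂ * Real.sqrt 3) / Real.sqrt 3 ∧
        β = (β₁ + β₂ * Real.sqrt 3) / Real.sqrt 3 ∧
        (3 : ℤ) ∣ (α₁ - 2 * β₁) := by
  obtain rfl : j = i + 4 := by omega
  have hsplit : (α : ℂ) * x ^ i + β * x ^ (i + 4) =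
      (((α - 2 * β : ℝ) : ℂ) + (β * √3 : ℝ) * x) * x ^ i := by
    rw [pow_add, x_pow_four]; push_cast; ring
  rw [hsplit, mul_x_pow_mem_Zx_iff, ofReal_add_mul_x_mem_Zx_iff]
  exact sub_two_mul_mem_and_mul_sqrt_three_mem_iff α β

theorem stmt5 (α β : ℝ) (i j : ℕ) (hj : j ≤ 5) (hij : i < j) (hd : j - i = 4) :
    (α : ℂ) * x ^ i + (β : ℂ) * x ^ j ∈ Zx ↔
      ∃ α₁ α₂ β₁ β₂ : ℤ,
        α = (α₁ + α₂ * Real.sqrt 3) / Real.sqrt 3 ∧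
        β = (β₁ + β₂ * Real.sqrt 3) / Real.sqrt 3 ∧
        (3 : ℤ) ∣ (α₁ - 2 * β₁) :=
  stmt5_general α β i j hd
end

section
/- With S = {(γ₁,γ₂) ∈ ℝ² : ¬(γ₁ ∈ (1/(2√3))G and γ₂ ∈ (1/2)G)}, A = {(γ₁,γ₂) ∈ S : 2√3·γ₁ + 2γ₂ ∈ G}, B = {(γ₁,γ₂) ∈ S : √3·γ₁ + 2γ₂ ∈ G}, S' = {(γ₁,γ₂) ∈ ℝ² : ¬(γ₁ ∈ (1/2)G and γ₂ ∈ (1/(2√3))G)}, D = {(γ₁,γ₂) ∈ S' : 2√3·γ₂ + 2γ₁ ∈ G}, E = {(γ₁,γ₂) ∈ S' : √3·γ₂ + 2γ₁ ∈ G}, one has B ∩ E = ∅, B ∩ D = ∅, and A ∩ E = ∅. -/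
/-- The scaled set `c·G = {c·g : g ∈ G}`. -/
def scaledG (c : ℝ) : Set ℝ := {r | ∃ g ∈ G, r = c * g}

noncomputable def S : Set (ℝ × ℝ) :=
  {p | ¬ (p.1 ∈ scaledG (1 / (2 * Real.sqrt 3)) ∧ p.2 ∈ scaledG (1 / 2))}

noncomputable def A : Set (ℝ × ℝ) := {p | p ∈ S ∧ 2 * Real.sqrt 3 * p.1 + 2 * p.2 ∈ G}

noncomputable def B : Set (ℝ × ℝ) := {p | p ∈ S ∧ Real.sqrt 3 * p.1 + 2 * p.2 ∈ G}

noncomputable def S' : Set (ℝ × ℝ) :=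
  {p | ¬ (p.1 ∈ scaledG (1 / 2) ∧ p.2 ∈ scaledG (1 / (2 * Real.sqrt 3)))}

noncomputable def D : Set (ℝ × ℝ) := {p | p ∈ S' ∧ 2 * Real.sqrt 3 * p.2 + 2 * p.1 ∈ G}

noncomputable def E : Set (ℝ × ℝ) := {p | p ∈ S' ∧ Real.sqrt 3 * p.2 + 2 * p.1 ∈ G}

lemma sq3 : Real.sqrt 3 * Real.sqrt 3 = 3 := Real.mul_self_sqrt (by norm_num)

lemma sqrt3_pos : (0:ℝ) < Real.sqrt 3 := Real.sqrt_pos.mpr (by norm_num)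

lemma mem_half (x : ℝ) (a b : ℤ) (h : 2 * x = a + b * Real.sqrt 3) :
    x ∈ scaledG (1 / 2) :=
  ⟨(a:ℝ) + b * Real.sqrt 3, ⟨a, b, rfl⟩, by linarith⟩

lemma mem_half_sqrt (x : ℝ) (a b : ℤ) (h : 2 * Real.sqrt 3 * x = a + b * Real.sqrt 3) :
    x ∈ scaledG (1 / (2 * Real.sqrt 3)) :=
  ⟨(a:ℝ) + b * Real.sqrt 3, ⟨a, b, rfl⟩, by
    have hs := sqrt3_pos
    field_simp
    linarith⟩

theorem stmt11 : B ∩ E = ∅ ∧ B ∩ D = ∅ ∧ A ∩ E = ∅ := by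
  set s := Real.sqrt 3 with hsdef
  have h3 : s * s = 3 := sq3
  refine ⟨?_, ?_, ?_⟩ <;> rw [Set.eq_empty_iff_forall_notMem]
  · rintro ⟨x, y⟩ ⟨⟨hS, a, b, hu⟩, ⟨_, c, d, hv⟩⟩
    simp only at hu hv
    refine hS ⟨mem_half_sqrt x (12*d - 6*a) (4*c - 6*b) ?_, mem_half y (4*a - 6*d) (4*b - 2*c) ?_⟩
    · push_cast
      linear_combination (-2*s*s)*hu + (4*s)*hv + (2*s*(x-b) + 2*(2*d-a))*h3
    · push_cast
      linear_combination 4*hu - 2*s*hv + 2*(y-d)*h3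
  · rintro ⟨x, y⟩ ⟨⟨hS, a, b, hu⟩, ⟨_, c, d, hv⟩⟩
    simp only at hu hv
    refine hS ⟨mem_half_sqrt x (6*a - 6*d) (6*b - 2*c) ?_, mem_half y (3*d - 2*a) (c - 2*b) ?_⟩
    · push_cast
      linear_combination (2*s*s)*hu - 2*s*hv + (2*s*(b-x) + 2*(a-d))*h3
    · push_cast
      linear_combination (1 - s*s)*hu + s*hv + (s*(x-b) - (a-d))*h3
  · rintro ⟨x, y⟩ ⟨⟨_, a, b, hu⟩, ⟨hS', c, d, hv⟩⟩
    simp only at hu hv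
    refine hS' ⟨mem_half x (3*b - 2*c) (a - 2*d) ?_, mem_half_sqrt y (6*c - 6*b) (6*d - 2*a) ?_⟩
    · push_cast
      linear_combination s*hu - 2*hv + (b - 2*x)*h3
    · push_cast
      linear_combination (-2*s)*hu + 6*hv + 2*(2*x-b)*h3
end
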